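/- A round i is preserving with respect to a phase predicate ψ if and only if there is a tuple f with ? ∉ set(f) such that ? ∈ fire_i(f,ψ). Moreover, if round i is solo-safe with respect to ψ and solo →[ψ↾_i]_i f, then f = solo. -/

import Mathlib

open Classical

namespace HO

/-! ### Values

`none` is the undefined value `?`; defined values are natural numbers, where
`some 0` plays the role of `a` and `some 1` the role of `b` (so `a < b`). -/

abbrev Val := Option ℕ

def aVal : ℕ := 0
def bVal : ℕ := 1

/-! ### Operations -/

inductive Op where
  | min : Op
  | smor : Op

/-- Minimum of a multiset of defined values (`none` if the multiset is empty). -/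
noncomputable def msMin (S : Multiset ℕ) : Option ℕ :=
  if h : S.toFinset.Nonempty then some (S.toFinset.min' h) else none

/-- Smallest most frequent value of a multiset (`none` if the multiset is empty). -/
noncomputable def msSmor (S : Multiset ℕ) : Option ℕ :=
  if h : (S.toFinset.filter fun v => ∀ w ∈ S.toFinset, S.count w ≤ S.count v).Nonempty
  then some ((S.toFinset.filter fun v => ∀ w ∈ S.toFinset, S.count w ≤ S.count v).min' h)
  else none

noncomputable def Op.apply : Op → Multiset ℕ → Option ℕ
  | Op.min, S => msMin S
  | Op.smor, S => msSmor S

/-! ### Rounds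

A round consists of at most one `uni` instruction followed by a list of `mult`
instructions with non-increasing thresholds, all thresholds lying in `[0,1)`. -/

structure Round where
  uniThr : Option ℝ
  mults : List (ℝ × Op)
  wfU : ∀ t ∈ uniThr, 0 ≤ t ∧ t < 1
  wfM : ∀ q ∈ mults, 0 ≤ q.1 ∧ q.1 < 1
  sorted : (mults.map Prod.fst).Chain' (· ≥ ·)

def Round.hasUni (R : Round) : Prop := R.uniThr.isSome = true
def Round.hasMult (R : Round) : Prop := R.mults ≠ []

/-- `thr_u^i`: the threshold of the uni instruction, `-1` if absent. -/
noncomputable def Round.thrU (R : Round) : ℝ := R.uniThr.getD (-1)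

noncomputable def minThr : List ℝ → ℝ
  | [] => -1
  | [t] => t
  | t :: ts => min t (minThr ts)

/-- `thr_m^{i,k}`: the smallest threshold of a mult instruction, `-1` if absent. -/
noncomputable def Round.thrM (R : Round) : ℝ := minThr (R.mults.map Prod.fst)

/-- Result of the first applicable `mult` instruction. -/
noncomputable def firstMult (n : ℕ) (S : Multiset ℕ) : List (ℝ × Op) → Option ℕ
  | [] => none
  | (t, op) :: rest =>
      if 1 < S.toFinset.card ∧ t * n < (S.card : ℝ) then op.apply S
      else firstMult n S rest

/-- `update_i(H)`: the result of the first instruction of the round whose condition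
is satisfied by `H − {?}`, and `?` (i.e. `none`) if no condition applies. -/
noncomputable def Round.update (R : Round) (n : ℕ) (H : Multiset Val) : Option ℕ :=
  if ∃ t ∈ R.uniThr,
      (H.filterMap id).toFinset.card = 1 ∧ t * n < ((H.filterMap id).card : ℝ)
  then msMin (H.filterMap id)
  else firstMult n (H.filterMap id) R.mults

/-! ### Communication predicates for a round -/

/-- A conjunction of atomic communication predicates for one round: possibly
`φ_=` (field `eq`) and possibly `φ_thr` (field `thr`, with `0 ≤ thr < 1`). -/
structure RoundPred where
  eq : Bool
  thr : Option ℝ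
  wf : ∀ t ∈ thr, 0 ≤ t ∧ t < 1

/-- `thr_i(ψ)`: the threshold appearing in the predicate, `-1` if absent. -/
noncomputable def RoundPred.thrVal (φ : RoundPred) : ℝ := φ.thr.getD (-1)

def RoundPred.isEqualizer (φ : RoundPred) : Prop := φ.eq = true

/-- Satisfaction of a round predicate by a tuple of heard-of multisets. -/
def RoundPred.sat {α : Type} (φ : RoundPred) (n : ℕ) (Hs : Fin n → Multiset α) : Prop :=
  (φ.eq = true → ∀ p q, Hs p = Hs q) ∧
  ∀ t ∈ φ.thr, ∀ p, t * n < ((Hs p).card : ℝ)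

/-- Logical implication between round predicates. -/
def RoundPred.implies (φ φ' : RoundPred) : Prop :=
  ∀ (α : Type) (n : ℕ) (Hs : Fin n → Multiset α), φ.sat n Hs → φ'.sat n Hs

/-! ### Tuples of values -/

/-- The multiset of values of a tuple. -/
def msetOf {n : ℕ} (f : Fin n → Val) : Multiset Val := Finset.univ.val.map f

def soloB (n : ℕ) : Fin n → Val := fun _ => some bVal
def soloA (n : ℕ) : Fin n → Val := fun _ => some aVal
def soloQ (n : ℕ) : Fin n → Val := fun _ => none

/-- `bias(θ)`: a tuple over `{a,b}` with `θ·n` entries equal to `b`. -/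
def isBias {n : ℕ} (θ : ℝ) (f : Fin n → Val) : Prop :=
  (∀ p, f p = some aVal ∨ f p = some bVal) ∧
  ((Finset.univ.filter fun p => f p = some bVal).card : ℝ) = θ * n

/-- `spread = bias(1/2)`. -/
def isSpread {n : ℕ} (f : Fin n → Val) : Prop := isBias (1/2) f

/-- `bias^?(θ)`: a tuple over `{?,b}` with `θ·n` entries equal to `b`. -/
def isBiasQ {n : ℕ} (θ : ℝ) (f : Fin n → Val) : Prop :=
  (∀ p, f p = none ∨ f p = some bVal) ∧
  ((Finset.univ.filter fun p => f p = some bVal).card : ℝ) = θ * n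

/-- `bias_a^?(θ)`: a tuple over `{?,a}` with `θ·n` entries equal to `a`. -/
def isBiasQa {n : ℕ} (θ : ℝ) (f : Fin n → Val) : Prop :=
  (∀ p, f p = none ∨ f p = some aVal) ∧
  ((Finset.univ.filter fun p => f p = some aVal).card : ℝ) = θ * n

/-! ### Round transitions -/

/-- Round transition `f →[φ]_i f'`: every process receives a sub-multiset of the
multiset of sent values, the tuple of heard-of multisets jointly satisfies `φ`,
and every process updates its variable accordingly. -/
def roundTrans (R : Round) (φ : RoundPred) {n : ℕ} (f f' : Fin n → Val) : Prop :=
  ∃ Hs : Fin n → Multiset Val,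
    (∀ p, Hs p ≤ msetOf f) ∧ φ.sat n Hs ∧ ∀ p, f' p = R.update n (Hs p)

/-- `d ∈ fire_i(f,φ)`. -/
def fire (R : Round) (φ : RoundPred) {n : ℕ} (f : Fin n → Val) (d : Val) : Prop :=
  ∃ f' : Fin n → Val, roundTrans R φ f f' ∧ ∃ p, f' p = d

/-! ### Algorithms -/

/-- An algorithm of the core language: rounds `1,…,r` (`r ≥ 2`), with a designated
input-update round `ir` (`1 ≤ ir < r`). -/
structure Algo where
  r : ℕ
  rounds : ℕ → Round
  ir : ℕ
  two_le_r : 2 ≤ r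
  one_le_ir : 1 ≤ ir
  ir_lt_r : ir < r

noncomputable def Algo.thrU (A : Algo) (i : ℕ) : ℝ := (A.rounds i).thrU
noncomputable def Algo.thrM (A : Algo) (i : ℕ) : ℝ := (A.rounds i).thrM
def Algo.hasUni (A : Algo) (i : ℕ) : Prop := (A.rounds i).hasUni
def Algo.hasMult (A : Algo) (i : ℕ) : Prop := (A.rounds i).hasMult

/-- A phase predicate: a conjunction of atomic predicates for every round. -/
abbrev PhasePred := ℕ → RoundPred

/-- Phase transition `(f,d) →ψ (f',d')`. -/
def phaseTrans (A : Algo) (ψ : PhasePred) {n : ℕ} (f d f' d' : Fin n → Val) : Prop :=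
  ∃ g : ℕ → Fin n → Val,
    g 0 = f ∧
    (∀ i, 1 ≤ i → i ≤ A.r → roundTrans (A.rounds i) (ψ i) (g (i - 1)) (g i)) ∧
    (∀ p, f' p = if g A.ir p = none then f p else g A.ir p) ∧
    (∀ p, d' p = if d p = none then g A.r p else d p)

/-- A chain of round transitions for rounds `k,…,l`. -/
def roundChain (A : Algo) (ψ : PhasePred) (k l : ℕ) {n : ℕ} (f f' : Fin n → Val) : Prop :=
  ∃ g : ℕ → Fin n → Val,
    g (k - 1) = f ∧ g l = f' ∧
    ∀ i, k ≤ i → i ≤ l → roundTrans (A.rounds i) (ψ i) (g (i - 1)) (g i)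

/-! ### Syntactic notions -/

/-- Round `i` is preserving w.r.t. `ψ`. -/
def Algo.preserving (A : Algo) (ψ : PhasePred) (i : ℕ) : Prop :=
  ¬ A.hasUni i ∨ ¬ A.hasMult i ∨ (ψ i).thrVal < max (A.thrU i) (A.thrM i)

/-- Round `i` is solo-safe w.r.t. `ψ`. -/
def Algo.soloSafe (A : Algo) (ψ : PhasePred) (i : ℕ) : Prop :=
  0 ≤ A.thrU i ∧ A.thrU i ≤ (ψ i).thrVal

/-- The border threshold `thr̄ = max(1 − thr_u^1, 1 − thr_m^{1,k}/2)`. -/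
noncomputable def Algo.borderThr (A : Algo) : ℝ :=
  max (1 - A.thrU 1) (1 - A.thrM 1 / 2)

/-- `ψ` is a decider: all rounds are solo-safe w.r.t. `ψ`. -/
def Algo.decider (A : Algo) (ψ : PhasePred) : Prop :=
  ∀ i, 1 ≤ i → i ≤ A.r → A.soloSafe ψ i

/-- `ψ` is a unifier. -/
def Algo.unifier (A : Algo) (ψ : PhasePred) : Prop :=
  A.thrM 1 ≤ (ψ 1).thrVal ∧
  (A.thrU 1 ≤ (ψ 1).thrVal ∨ A.borderThr ≤ (ψ 1).thrVal) ∧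
  ∃ i, 1 ≤ i ∧ i ≤ A.ir ∧ (ψ i).isEqualizer ∧
    (∀ j, 2 ≤ j → j ≤ i → ¬ A.preserving ψ j) ∧
    (∀ j, i < j → j ≤ A.ir → A.soloSafe ψ j)

/-- The algorithm is syntactically safe. -/
def Algo.syntSafe (A : Algo) : Prop :=
  A.hasMult 1 ∧
  (∀ i, 1 ≤ i → i ≤ A.r → A.hasUni i) ∧
  (∀ q ∈ (A.rounds 1).mults, q.2 = Op.smor) ∧
  1 - A.thrU (A.ir + 1) ≤ A.thrM 1 / 2 ∧
  1 - A.thrU (A.ir + 1) ≤ A.thrU 1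

/-- Assumption (A) relative to the global predicate `gl`. -/
def Algo.assumptionA (A : Algo) (gl : PhasePred) : Prop :=
  ∀ i, 1 ≤ i → i ≤ A.r →
    (∀ j, 1 ≤ j → j < i → ¬ A.preserving gl j) →
    (A.hasUni i → (gl i).thrVal ≤ A.thrU i) ∧
    (A.hasMult i → (gl i).thrVal ≤ A.thrM i)

/-- Proviso (P): the global predicate has no equalizer and round `ir+1` has no
mult instruction. -/
def Algo.provisoP (A : Algo) (gl : PhasePred) : Prop :=
  (∀ i, 1 ≤ i → i ≤ A.r → ¬ (gl i).isEqualizer) ∧ ¬ A.hasMult (A.ir + 1)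

/-- Removing all mult instructions of a round. -/
def Round.dropMults (R : Round) : Round :=
  { uniThr := R.uniThr, mults := [], wfU := R.wfU,
    wfM := by simp, sorted := by first | exact List.chain'_nil | exact List.IsChain.nil | constructor }

/-- Removing all mult instructions of round `i` of an algorithm. -/
def Algo.dropMultsAt (A : Algo) (i : ℕ) : Algo :=
  { A with rounds := fun j => if j = i then (A.rounds j).dropMults else A.rounds j }

/-! ### Communication predicates, executions, consensus -/

/-- A communication predicate `(G ψ̄) ∧ F(ψ^1 ∧ F(ψ^2 ∧ … ∧ F ψ^k))`:
a global phase predicate and sporadic phase predicates `ψ^1,…,ψ^k`. -/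
structure CommPred where
  glob : PhasePred
  k : ℕ
  spor : ℕ → PhasePred

/-- Roundwise implication between phase predicates of an algorithm. -/
def predImplies (A : Algo) (ψ ψ' : PhasePred) : Prop :=
  ∀ i, 1 ≤ i → i ≤ A.r → (ψ i).implies (ψ' i)

/-- An execution of an algorithm respecting a communication predicate: an infinite
sequence of phase transitions under the global predicate, together with an
increasing sequence of times at which the sporadic predicates hold. -/
structure Exec (A : Algo) (C : CommPred) (n : ℕ) where
  inp : ℕ → Fin n → Val
  dec : ℕ → Fin n → Val
  inp0 : ∀ p, inp 0 p ≠ none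
  dec0 : ∀ p, dec 0 p = none
  step : ∀ s, phaseTrans A C.glob (inp s) (dec s) (inp (s + 1)) (dec (s + 1))
  sporTime : ℕ → ℕ
  mono : StrictMono sporTime
  sporStep : ∀ i, 1 ≤ i → i ≤ C.k →
    phaseTrans A (C.spor i) (inp (sporTime i)) (dec (sporTime i))
      (inp (sporTime i + 1)) (dec (sporTime i + 1))

/-- Agreement: in every reachable state, any two non-`?` decision values coincide. -/
def Agreement (A : Algo) (C : CommPred) : Prop :=
  ∀ n, 0 < n → ∀ E : Exec A C n, ∀ s p q v w,
    E.dec s p = some v → E.dec s q = some w → v = w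

/-- Termination: every execution reaches a state where all processes have decided. -/
def Termination (A : Algo) (C : CommPred) : Prop :=
  ∀ n, 0 < n → ∀ E : Exec A C n, ∃ s, ∀ p, E.dec s p ≠ none

/-- Solving consensus: agreement and termination. -/
def SolvesConsensus (A : Algo) (C : CommPred) : Prop :=
  Agreement A C ∧ Termination A C

/-! If `?`-free values are sent, a process can only compute `?` when no instruction applies to
what it heard. When `thr_i(ψ)` is at least one uni and one mult threshold, every heard-of
multiset allowed by `ψ` is large enough for the uni instruction if it holds a single value and
for that mult instruction otherwise, so `?` cannot fire. Conversely, if `ψ` has no threshold,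
hearing nothing yields `?`; and if all uni thresholds (or all mult thresholds) exceed
`thr_i(ψ) = s`, pick `n` large and `m ≥ 2` with `s·n < m ≤ t·n`, where `t ≤ 1` lies below all
those thresholds: if every process hears `m` copies of one value (or `m` distinct values), no
instruction applies. From `solo`, every process hears only `b`, more than `thr_u^i·n` times when
the round is solo-safe, so the uni instruction yields `b`. -/

lemma filterMap_id_map_some (s : Multiset ℕ) : (s.map (some : ℕ → Val)).filterMap id = s := by
  rw [Multiset.filterMap_map]
  exact Multiset.filterMap_some s

lemma card_filterMap_id {H : Multiset Val} (h : none ∉ H) : (H.filterMap id).card = H.card := by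
  induction H using Multiset.induction with
  | empty => rfl
  | cons a H ih =>
    obtain ⟨v, rfl⟩ := Option.ne_none_iff_exists'.1 fun ha => h (ha ▸ Multiset.mem_cons_self _ _)
    rw [Multiset.filterMap_cons_some id _ _ rfl, Multiset.card_cons, Multiset.card_cons,
      ih fun hH => h (Multiset.mem_cons_of_mem hH)]

lemma msetOf_const (n : ℕ) (x : Val) : msetOf (fun _ : Fin n => x) = Multiset.replicate n x := by
  simp [msetOf]

lemma msetOf_some_val (n : ℕ) :
    msetOf (fun p : Fin n => some p.val) = (Multiset.range n).map some := by
  rw [msetOf, Fin.univ_val_map, ← Multiset.coe_range, Multiset.map_coe]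
  congr 1
  exact List.ext_getElem (by simp) (by simp)

lemma lt_minThr_iff {s : ℝ} : ∀ {L : List ℝ}, L ≠ [] → (s < minThr L ↔ ∀ t ∈ L, s < t)
  | [], h => absurd rfl h
  | [t], _ => by simp [minThr]
  | t :: u :: ts, _ => by
    rw [minThr.eq_3 t (u :: ts) (List.cons_ne_nil u ts), lt_min_iff,
      lt_minThr_iff (List.cons_ne_nil u ts)]
    exact List.forall_mem_cons.symm

lemma RoundPred.thrVal_mem_thr {φ : RoundPred} (h : 0 ≤ φ.thrVal) : φ.thrVal ∈ φ.thr := by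
  cases hφ : φ.thr with
  | none => simp [RoundPred.thrVal, hφ] at h; linarith
  | some s => simp [RoundPred.thrVal, hφ]

lemma Round.thrU_mem_uniThr {R : Round} (h : 0 ≤ R.thrU) : R.thrU ∈ R.uniThr := by
  cases hR : R.uniThr with
  | none => simp [Round.thrU, hR] at h; linarith
  | some t => simp [Round.thrU, hR]

lemma exists_nat_mul_lt_le (T : Finset ℝ) {s : ℝ} (hs0 : 0 ≤ s) (hs1 : s < 1)
    (hsT : ∀ t ∈ T, s < t) :
    ∃ n m : ℕ, 2 ≤ m ∧ m ≤ n ∧ s * n < m ∧ ∀ t ∈ T, (m : ℝ) ≤ t * n := by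
  set t := (insert 1 T).min' (Finset.insert_nonempty 1 T)
  have hst : s < t := (Finset.lt_min'_iff _ _).2 (by simpa using ⟨hs1, hsT⟩)
  have ht1 : t ≤ 1 := Finset.min'_le _ _ (Finset.mem_insert_self 1 T)
  have htT : ∀ u ∈ T, t ≤ u := fun u hu => Finset.min'_le _ _ (Finset.mem_insert_of_mem hu)
  obtain ⟨n, hn⟩ := exists_nat_gt (2 / (t - s))
  have hgap : 2 < (t - s) * n := by rwa [div_lt_iff₀' (sub_pos.2 hst)] at hn
  have htn : 0 ≤ t * n := by nlinarith
  refine ⟨n, ⌊t * n⌋₊, Nat.le_floor (by push_cast; nlinarith), ?_, ?_, ?_⟩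
  · exact Nat.floor_le_of_le (by nlinarith)
  · nlinarith [Nat.lt_floor_add_one (t * n)]
  · exact fun u hu => (Nat.floor_le htn).trans (by nlinarith [htT u hu])

lemma msMin_ne_none {S : Multiset ℕ} (hS : S ≠ 0) : msMin S ≠ none := by
  simp [msMin, Multiset.toFinset_nonempty.2 hS]

lemma msSmor_ne_none {S : Multiset ℕ} (hS : S ≠ 0) : msSmor S ≠ none := by
  obtain ⟨x, hx, hmax⟩ := S.toFinset.exists_max_image S.count (Multiset.toFinset_nonempty.2 hS)
  simp only [msSmor, ne_eq, dite_eq_right_iff, reduceCtorEq, imp_false, not_not]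
  exact ⟨x, Finset.mem_filter.2 ⟨hx, hmax⟩⟩

lemma Op.apply_ne_none (op : Op) {S : Multiset ℕ} (hS : S ≠ 0) : op.apply S ≠ none := by
  cases op
  exacts [msMin_ne_none hS, msSmor_ne_none hS]

lemma firstMult_eq_none_iff (n : ℕ) (S : Multiset ℕ) (L : List (ℝ × Op)) :
    firstMult n S L = none ↔ ∀ q ∈ L, ¬ (1 < S.toFinset.card ∧ q.1 * n < S.card) := by
  induction L with
  | nil => simp [firstMult]
  | cons q L ih =>
    obtain ⟨t, op⟩ := q
    rw [firstMult, List.forall_mem_cons]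
    split_ifs with h
    · have hS : S ≠ 0 := fun h0 => by simp [h0] at h
      simpa [h] using op.apply_ne_none hS
    · simp [h, ih]

lemma Round.update_eq_none_iff (R : Round) (n : ℕ) (H : Multiset Val) :
    R.update n H = none ↔
      (∀ t ∈ R.uniThr, ¬ ((H.filterMap id).toFinset.card = 1 ∧
        t * n < (H.filterMap id).card)) ∧
      ∀ q ∈ R.mults, ¬ (1 < (H.filterMap id).toFinset.card ∧
        q.1 * n < (H.filterMap id).card) := by
  rw [Round.update]
  split_ifs with h
  · obtain ⟨t, ht, hcard, hlt⟩ := h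
    have hS : H.filterMap id ≠ 0 := fun h0 => by simp [h0] at hcard
    exact iff_of_false (msMin_ne_none hS) fun hnone => hnone.1 t ht ⟨hcard, hlt⟩
  · rw [firstMult_eq_none_iff]
    exact ⟨fun hm => ⟨fun t ht hc => h ⟨t, ht, hc⟩, hm⟩, And.right⟩

lemma Round.update_replicate_eq_none (R : Round) {n m : ℕ} (v : ℕ)
    (hu : ∀ t ∈ R.uniThr, (m : ℝ) ≤ t * n) :
    R.update n (Multiset.replicate m (some v)) = none := by
  rw [R.update_eq_none_iff, ← Multiset.map_replicate, filterMap_id_map_some,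
    Multiset.card_replicate]
  have hcard : (Multiset.replicate m v).toFinset.card ≤ 1 := by
    rw [Multiset.toFinset_replicate]
    split_ifs <;> simp
  exact ⟨fun t ht h => (hu t ht).not_gt h.2, fun q _ h => by omega⟩

lemma Round.update_map_some_range_eq_none (R : Round) {n m : ℕ} (hm : 2 ≤ m)
    (hq : ∀ q ∈ R.mults, (m : ℝ) ≤ q.1 * n) :
    R.update n ((Multiset.range m).map some) = none := by
  rw [R.update_eq_none_iff, filterMap_id_map_some, Multiset.card_range,
    Multiset.toFinset_card_of_nodup (Multiset.nodup_range m), Multiset.card_range]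
  exact ⟨fun t _ h => by omega, fun q hqm h => (hq q hqm).not_gt h.2⟩

lemma Round.update_ne_none (R : Round) {n : ℕ} {H : Multiset Val}
    (hu : ∃ t ∈ R.uniThr, t * n < (H.filterMap id).card)
    (hq : ∃ q ∈ R.mults, q.1 * n < (H.filterMap id).card) :
    R.update n H ≠ none := by
  obtain ⟨t, ht, htS⟩ := hu
  obtain ⟨q, hqm, hqS⟩ := hq
  have hS : H.filterMap id ≠ 0 := by
    rintro h0
    rw [h0, Multiset.card_zero, Nat.cast_zero] at htS
    exact htS.not_ge (mul_nonneg (R.wfU t ht).1 n.cast_nonneg)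
  have hpos := (Multiset.toFinset_nonempty.2 hS).card_pos
  rw [Ne, R.update_eq_none_iff]
  rintro ⟨hnu, hnq⟩
  by_cases h1 : (H.filterMap id).toFinset.card = 1
  · exact hnu t ht ⟨h1, htS⟩
  · exact hnq q hqm ⟨by omega, hqS⟩

lemma Round.update_replicate_of_mem_uniThr (R : Round) {n m : ℕ} {t : ℝ} (v : ℕ)
    (ht : t ∈ R.uniThr) (htm : t * n < m) :
    R.update n (Multiset.replicate m (some v)) = some v := by
  have hm : m ≠ 0 := by
    rintro rfl
    exact htm.not_ge (by simpa using mul_nonneg (R.wfU t ht).1 n.cast_nonneg)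
  have hcard : (Multiset.replicate m v).toFinset = {v} := by
    rw [Multiset.toFinset_replicate, if_neg hm]
  rw [Round.update, ← Multiset.map_replicate, filterMap_id_map_some, hcard,
    if_pos ⟨t, ht, by simpa using htm⟩]
  simp [msMin, hcard]

lemma fire_none_of_update_eq_none (R : Round) (φ : RoundPred) {n : ℕ} (hn : 0 < n)
    {f : Fin n → Val} {H : Multiset Val} (hH : H ≤ msetOf f)
    (hthr : ∀ t ∈ φ.thr, t * n < H.card) (hupd : R.update n H = none) :
    fire R φ f none :=
  ⟨fun _ => none, ⟨fun _ => H, fun _ => hH, ⟨fun _ _ _ => rfl, fun t ht _ => hthr t ht⟩,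
    fun _ => hupd.symm⟩, ⟨0, hn⟩, rfl⟩

lemma Round.exists_fire_none (R : Round) (φ : RoundPred)
    (h : (∀ u ∈ R.uniThr, φ.thrVal < u) ∨ ∀ q ∈ R.mults, φ.thrVal < q.1) :
    ∃ (n : ℕ) (f : Fin n → Val), 0 < n ∧ (∀ p, f p ≠ none) ∧ fire R φ f none := by
  rcases hφ : φ.thr with _ | s
  · refine ⟨1, fun _ => some 0, one_pos, by simp, ?_⟩
    exact fire_none_of_update_eq_none R φ one_pos (Multiset.zero_le _) (by simp [hφ])
      ((R.update_eq_none_iff 1 0).2 (by simp))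
  have hs : φ.thrVal = s := by simp [RoundPred.thrVal, hφ]
  have hthr : ∀ n m : ℕ, s * n < m → ∀ t ∈ φ.thr, t * n < m := by simp [hφ]
  obtain ⟨hs0, hs1⟩ := φ.wf s hφ
  rcases h with hu | hq
  · obtain ⟨n, m, hm2, hmn, hsm, hmu⟩ :=
      exists_nat_mul_lt_le R.uniThr.toFinset hs0 hs1 (by simpa [hs] using hu)
    refine ⟨n, fun _ => some 0, by omega, by simp, ?_⟩
    refine fire_none_of_update_eq_none R φ (by omega) (H := Multiset.replicate m (some 0)) ?_
      (by simpa using hthr n m hsm) (R.update_replicate_eq_none 0 (by simpa using hmu))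
    rw [msetOf_const]
    exact Multiset.replicate_le_replicate _ |>.2 hmn
  · obtain ⟨n, m, hm2, hmn, hsm, hmq⟩ :=
      exists_nat_mul_lt_le (R.mults.map Prod.fst).toFinset hs0 hs1 (by simpa [hs] using hq)
    refine ⟨n, fun p => some p.val, by omega, by simp, ?_⟩
    refine fire_none_of_update_eq_none R φ (by omega) (H := (Multiset.range m).map some) ?_
      (by simpa using hthr n m hsm)
      (R.update_map_some_range_eq_none hm2 fun q hq => hmq q.1 (by simpa using ⟨q.2, hq⟩))
    rw [msetOf_some_val]
    exact Multiset.map_le_map (Multiset.range_le.2 hmn)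

lemma Round.not_fire_none (R : Round) (φ : RoundPred)
    (hu : ∃ u ∈ R.uniThr, u ≤ φ.thrVal) (hq : ∃ q ∈ R.mults, q.1 ≤ φ.thrVal)
    {n : ℕ} {f : Fin n → Val} (hf : ∀ p, f p ≠ none) : ¬ fire R φ f none := by
  rintro ⟨f', ⟨Hs, hle, ⟨-, hthr⟩, hupd⟩, p, hp⟩
  obtain ⟨u, hu, hus⟩ := hu
  have hcard : φ.thrVal * n < (Hs p).card :=
    hthr _ (RoundPred.thrVal_mem_thr ((R.wfU u hu).1.trans hus)) p
  have hnone : none ∉ Hs p := fun h => by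
    obtain ⟨q, -, hq⟩ := Multiset.mem_map.1 (Multiset.mem_of_le (hle p) h)
    exact hf q hq
  rw [← card_filterMap_id hnone] at hcard
  have above {t : ℝ} (ht : t ≤ φ.thrVal) : t * n < ((Hs p).filterMap id).card :=
    (mul_le_mul_of_nonneg_right ht n.cast_nonneg).trans_lt hcard
  obtain ⟨q, hq, hqs⟩ := hq
  exact R.update_ne_none ⟨u, hu, above hus⟩ ⟨q, hq, above hqs⟩ ((hupd p).symm.trans hp)

lemma Round.exists_fire_none_iff (R : Round) (φ : RoundPred) :
    (∃ (n : ℕ) (f : Fin n → Val), 0 < n ∧ (∀ p, f p ≠ none) ∧ fire R φ f none) ↔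
      (∀ u ∈ R.uniThr, φ.thrVal < u) ∨ ∀ q ∈ R.mults, φ.thrVal < q.1 := by
  refine ⟨?_, R.exists_fire_none φ⟩
  rintro ⟨n, f, -, hf, hfire⟩
  by_contra h
  simp only [not_or, not_forall, not_lt, exists_prop] at h
  exact R.not_fire_none φ h.1 h.2 hf hfire

lemma Algo.preserving_iff (A : Algo) (ψ : PhasePred) (i : ℕ) :
    A.preserving ψ i ↔
      (∀ u ∈ (A.rounds i).uniThr, (ψ i).thrVal < u) ∨
        ∀ q ∈ (A.rounds i).mults, (ψ i).thrVal < q.1 := by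
  simp only [Algo.preserving, Algo.hasUni, Algo.hasMult, Algo.thrU, Algo.thrM, Round.hasUni,
    Round.hasMult, Round.thrU, Round.thrM]
  generalize A.rounds i = R
  rcases hu : R.uniThr with _ | u
  · simp
  rcases eq_or_ne R.mults [] with hm | hm
  · simp [hm]
  simp only [Option.isSome_some, not_true_eq_false, ne_eq, hm, not_false_eq_true, Option.getD_some,
    false_or, Option.mem_some_iff, forall_eq', lt_max_iff]
  rw [lt_minThr_iff (by simpa using hm), List.forall_mem_map]

lemma Round.eq_const_of_roundTrans (R : Round) (φ : RoundPred) {t : ℝ} (ht : t ∈ R.uniThr)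
    (htφ : t ≤ φ.thrVal) {n : ℕ} {v : ℕ} {f : Fin n → Val}
    (h : roundTrans R φ (fun _ => some v) f) : f = fun _ => some v := by
  obtain ⟨Hs, hle, ⟨-, hthr⟩, hupd⟩ := h
  funext p
  have hcard : φ.thrVal * n < (Hs p).card :=
    hthr _ (RoundPred.thrVal_mem_thr ((R.wfU t ht).1.trans htφ)) p
  have hrep : Hs p = Multiset.replicate (Hs p).card (some v) := by
    refine Multiset.eq_replicate_card.2 fun x hx => Multiset.eq_of_mem_replicate (n := n) ?_
    simpa [msetOf_const] using Multiset.mem_of_le (hle p) hx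
  rw [hupd p, hrep, R.update_replicate_of_mem_uniThr v ht
    ((mul_le_mul_of_nonneg_right htφ n.cast_nonneg).trans_lt hcard)]

theorem preserving_iff_fires_undef_general (A : Algo) (ψ : PhasePred) (i : ℕ) :
    (A.preserving ψ i ↔
      ∃ (n : ℕ) (f : Fin n → Val), 0 < n ∧ (∀ p, f p ≠ none) ∧
        fire (A.rounds i) (ψ i) f none) ∧
    (A.soloSafe ψ i →
      ∀ (n : ℕ) (f : Fin n → Val),
        roundTrans (A.rounds i) (ψ i) (soloB n) f → f = soloB n) := by
  refine ⟨(A.preserving_iff ψ i).trans ((A.rounds i).exists_fire_none_iff (ψ i)).symm, ?_⟩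
  rintro ⟨hu0, huψ⟩ n f hf
  exact (A.rounds i).eq_const_of_roundTrans (ψ i) (Round.thrU_mem_uniThr hu0) huψ hf

/-- Lemma 1.  A round `i` is preserving w.r.t. `ψ` iff there is
a `?`-free tuple `f` with `? ∈ fire_i(f,ψ)`; and if round `i` is solo-safe
w.r.t. `ψ` then the only round transition from `solo` leads to `solo`. -/
theorem preserving_iff_fires_undef (A : Algo) (ψ : PhasePred) (i : ℕ)
    (hi : 1 ≤ i) (hir : i ≤ A.r) :
    (A.preserving ψ i ↔
      ∃ (n : ℕ) (f : Fin n → Val), 0 < n ∧ (∀ p, f p ≠ none) ∧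
        fire (A.rounds i) (ψ i) f none) ∧
    (A.soloSafe ψ i →
      ∀ (n : ℕ) (f : Fin n → Val),
        roundTrans (A.rounds i) (ψ i) (soloB n) f → f = soloB n) :=
  preserving_iff_fires_undef_general A ψ i

end HO
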